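/- Let $H$ be a Hopf algebra, $x \in H$, and $g \in H$ a grouplike element. Then for all $n \geq 1$, the $n$-th Sweedler power of $xg$ is $(xg)^{[n]} = x_{(1)} \varphi(x_{(2)}) \cdots \varphi^{n-1}(x_{(n)}) \cdot g^n$, where $\varphi(a) = g a g^{-1}$. -/

import Mathlib

open TensorProduct

variable {k H : Type*} [Field k] [Ring H] [HopfAlgebra k H]

/-- Convolution product of two linear endomorphisms of a Hopf algebra:
`(f ⋆ g)(h) = f(h₍₁₎) g(h₍₂₎)`. -/
noncomputable def convProd (f g : H →ₗ[k] H) : H →ₗ[k] H :=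
  LinearMap.mul' k H ∘ₗ TensorProduct.map f g ∘ₗ Coalgebra.comul

/-- The `n`-th Sweedler power map: `n`-th convolution power of the identity. -/
noncomputable def sweedlerPow (k H : Type*) [Field k] [Ring H] [HopfAlgebra k H] :
    ℕ → (H →ₗ[k] H)
  | 0 => (Algebra.linearMap k H) ∘ₗ Coalgebra.counit
  | n + 1 => convProd LinearMap.id (sweedlerPow k H n)

/-- The convolution product `id ⋆ φ ⋆ φ² ⋆ ⋯ ⋆ φ^(n-1)` for a linear map `φ`. -/
noncomputable def twistedPow (φ : Module.End k H) : ℕ → (H →ₗ[k] H)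
  | 0 => (Algebra.linearMap k H) ∘ₗ Coalgebra.counit
  | n + 1 => convProd (twistedPow φ n) (φ ^ n)

/-!
Write `T_n = id ⋆ φ ⋆ ⋯ ⋆ φ^(n-1)` and `R_g` for right multiplication by `g`. Since `g` is
group-like, `R_g` is a coalgebra endomorphism, so it can be pushed inside a convolution:
`id^{⋆(n+1)} ∘ R_g = R_g ⋆ (id^{⋆n} ∘ R_g)`. Inductively the second factor is `R_{gⁿ} ∘ T_n`, and
moving the middle `g` to the right conjugates what follows it: `a g b gⁿ = a (g b g⁻¹) gⁿ⁺¹`.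
This gives `R_{gⁿ⁺¹} ∘ (id ⋆ (φ ∘ T_n))`, and `id ⋆ (φ ∘ T_n) = T_{n+1}` because the algebra
map `φ` distributes over convolution.
-/

open WithConv

section ConvolutionAlgebra

variable {R A C : Type*} [CommSemiring R] [Semiring A] [Algebra R A]
  [AddCommMonoid C] [Module R C] [Coalgebra R C]

variable (R) in
def Units.conjAlgHom (u : Aˣ) : A →ₐ[R] A :=
  MulSemiringAction.toAlgHom R A (ConjAct.toConjAct u)

@[simp]
lemma Units.conjAlgHom_apply (u : Aˣ) (a : A) : u.conjAlgHom R a = u * a * ↑u⁻¹ := by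
  simp [Units.conjAlgHom, ConjAct.units_smul_def]

lemma toConv_mulRight_comp_convMul_mulRight_comp (u : Aˣ) (v : A) (f f' : C →ₗ[R] A) :
    toConv (LinearMap.mulRight R (u : A) ∘ₗ f) * toConv (LinearMap.mulRight R v ∘ₗ f') =
      toConv (LinearMap.mulRight R (u * v) ∘ₗ
        (toConv f * toConv ((u.conjAlgHom R).toLinearMap ∘ₗ f')).ofConv) := by
  ext c
  let r := Coalgebra.Repr.arbitrary R c
  simp only [LinearMap.comp_apply, r.convMul_apply, LinearMap.mulRight_apply,
    Finset.sum_mul, AlgHom.toLinearMap_apply, Units.conjAlgHom_apply]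
  refine Finset.sum_congr rfl fun i _ => ?_
  simp only [mul_assoc, Units.inv_mul_cancel_left]

end ConvolutionAlgebra

section GroupLike

variable {R A : Type*} [CommSemiring R] [Semiring A] [Bialgebra R A] {a : A}

def IsGroupLikeElem.mulRightCoalgHom (ha : IsGroupLikeElem R a) : A →ₗc[R] A where
  toLinearMap := LinearMap.mulRight R a
  counit_comp := by ext b; simp [Bialgebra.counit_mul, ha.counit_eq_one]
  map_comp_comul := by
    ext b
    simp only [LinearMap.comp_apply, LinearMap.mulRight_apply, Bialgebra.comul_mul,
      ha.comul_eq_tmul_self]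
    induction Coalgebra.comul (R := R) b using TensorProduct.induction_on with
    | zero => simp
    | tmul x y => simp
    | add x y hx hy => simp [hx, hy, add_mul]

end GroupLike

lemma toConv_convProd (f g : H →ₗ[k] H) : toConv (convProd f g) = toConv f * toConv g := rfl

lemma twistedPow_succ' (φ : H →ₐ[k] H) (n : ℕ) :
    twistedPow φ.toLinearMap (n + 1) =
      convProd LinearMap.id (φ.toLinearMap ∘ₗ twistedPow φ.toLinearMap n) := by
  apply toConv_injective
  induction n with
  | zero =>
    change 1 * toConv (φ.toLinearMap ^ 0) =
      toConv LinearMap.id * toConv (φ.toLinearMap ∘ₗ (1 : WithConv (H →ₗ[k] H)).ofConv)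
    rw [LinearMap.algHom_comp_convOne, pow_zero, Module.End.one_eq_id, toConv_ofConv, one_mul,
      mul_one]
  | succ n ih =>
    calc toConv (twistedPow φ.toLinearMap (n + 2))
        = toConv (twistedPow φ.toLinearMap (n + 1)) * toConv (φ.toLinearMap ^ (n + 1)) := rfl
      _ = toConv LinearMap.id * (toConv (φ.toLinearMap ∘ₗ twistedPow φ.toLinearMap n) *
            toConv (φ.toLinearMap ∘ₗ φ.toLinearMap ^ n)) := by
        rw [ih, toConv_convProd, mul_assoc, pow_succ', Module.End.mul_eq_comp]
      _ = toConv (convProd LinearMap.id (φ.toLinearMap ∘ₗ twistedPow φ.toLinearMap (n + 1))) := by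
        rw [toConv_convProd]
        exact congrArg _ (congrArg toConv
          (LinearMap.algHom_comp_convMul_distrib φ (toConv _) (toConv _))).symm

lemma sweedlerPow_comp_mulRight {u : Hˣ} (hu : IsGroupLikeElem k (u : H)) (n : ℕ) :
    sweedlerPow k H n ∘ₗ LinearMap.mulRight k (u : H) =
      LinearMap.mulRight k ((u : H) ^ n) ∘ₗ twistedPow (u.conjAlgHom k).toLinearMap n := by
  induction n with
  | zero => ext; simp [sweedlerPow, twistedPow, Bialgebra.counit_mul, hu.counit_eq_one]
  | succ n ih =>
    calc sweedlerPow k H (n + 1) ∘ₗ LinearMap.mulRight k (u : H)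
        = (toConv (LinearMap.mulRight k (u : H) ∘ₗ LinearMap.id) *
            toConv (sweedlerPow k H n ∘ₗ LinearMap.mulRight k (u : H))).ofConv :=
          LinearMap.convMul_comp_coalgHom_distrib (toConv LinearMap.id)
            (toConv (sweedlerPow k H n)) hu.mulRightCoalgHom
      _ = LinearMap.mulRight k ((u : H) * (u : H) ^ n) ∘ₗ
            convProd LinearMap.id ((u.conjAlgHom k).toLinearMap ∘ₗ
              twistedPow (u.conjAlgHom k).toLinearMap n) := by
        rw [ih, toConv_mulRight_comp_convMul_mulRight_comp]
        rfl
      _ = _ := by rw [← pow_succ', ← twistedPow_succ']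

/-- For `x ∈ H` and a grouplike `g ∈ H`, the `n`-th Sweedler power of `x g` is
`(xg)^[n] = x₍₁₎ φ(x₍₂₎) ⋯ φ^(n-1)(x₍ₙ₎) ⬝ gⁿ`, where `φ(a) = g a g⁻¹` (and `g⁻¹ = S(g)`). -/
theorem sweedlerPow_mul_grouplike (x g : H)
    (hg : Coalgebra.comul (R := k) g = g ⊗ₜ[k] g)
    (hε : Coalgebra.counit (R := k) g = 1) :
    ∀ n : ℕ, 1 ≤ n →
      sweedlerPow k H n (x * g)
        = twistedPow
            (LinearMap.mulLeft k g ∘ₗ LinearMap.mulRight k (HopfAlgebra.antipode (R := k) g))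
            n x * g ^ n := by
  intro n _
  have hgl : IsGroupLikeElem k g := ⟨hε, hg⟩
  set u : Hˣ := GroupLike.toUnits k ⟨g, hgl⟩
  have hφ : LinearMap.mulLeft k g ∘ₗ LinearMap.mulRight k (HopfAlgebra.antipode (R := k) g) =
      (u.conjAlgHom k).toLinearMap := by
    ext a; simp [u, mul_assoc]
  rw [hφ]
  exact LinearMap.congr_fun (sweedlerPow_comp_mulRight (u := u) hgl n) x
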